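/- Let K be a real Lie algebra and ∂ : K* → K a linear map that is symmetric and K-invariant. Let gr(m) := {((γ+γ', k), (γ, k+∂γ'), (γ', k)) : γ, γ' ∈ K*, k ∈ K} ⊆ (K* × K)³. Then: (i) gr(m) is isotropic with respect to the pairing of (K*×K) × (K*×K)‾ × (K*×K)‾, i.e., for all (a1,b1,c1), (a2,b2,c2) ∈ gr(m) one has ⟨a1,a2⟩ − ⟨b1,b2⟩ − ⟨c1,c2⟩ = 0, where ⟨(γ,k),(γ',k')⟩ := (1/2)(γ(k') + γ'(k) + γ(∂γ')); and (ii) gr(m) is closed under the componentwise double bracket ⁅(γ,k),(γ',k')⁆ := (k·γ' − k'·γ + (∂γ)·γ', [k,k']). -/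

import Mathlib

open Module

/-- The coadjoint action of `k ∈ K` on `γ ∈ K*`: `(k·γ)(x) = -γ ⁅k, x⁆`. -/
def coad {K : Type*} [LieRing K] [LieAlgebra ℝ K] (k : K) (γ : Dual ℝ K) :
    Dual ℝ K :=
  -(γ ∘ₗ (LieAlgebra.ad ℝ K k))

/-- The double bracket on `K* × K` induced by a symmetric `K`-invariant map `δ : K* → K`. -/
def dblBracket {K : Type*} [LieRing K] [LieAlgebra ℝ K] (δ : Dual ℝ K →ₗ[ℝ] K)
    (e f : Dual ℝ K × K) : Dual ℝ K × K :=
  (coad e.2 f.1 - coad f.2 e.1 + coad (δ e.1) f.1, ⁅e.2, f.2⁆)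

/-- The pairing on `K* × K`: `⟨(γ,k),(γ',k')⟩ = (1/2)(γ(k') + γ'(k) + γ(δγ'))`. -/
noncomputable def dblPairing {K : Type*} [LieRing K] [LieAlgebra ℝ K] (δ : Dual ℝ K →ₗ[ℝ] K)
    (e f : Dual ℝ K × K) : ℝ :=
  (1 / 2) * (e.1 f.2 + f.1 e.2 + e.1 (δ f.1))

/-- The graph of the groupoid multiplication of `K* ⊕ K ⇉ K`. -/
def grMul {K : Type*} [LieRing K] [LieAlgebra ℝ K] (δ : Dual ℝ K →ₗ[ℝ] K) :
    Set ((Dual ℝ K × K) × (Dual ℝ K × K) × (Dual ℝ K × K)) :=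
  {x | ∃ (γ γ' : Dual ℝ K) (k : K), x = ((γ + γ', k), (γ, k + δ γ'), (γ', k))}

/-! Symmetry and invariance make `δ` equivariant, `δ (k·γ) = ⁅k, δγ⁆`, so the target map
`(γ, k) ↦ k + δγ` turns the double bracket into the Lie bracket of `K`; this gives the middle
component of closure under the bracket. The outer components come from additivity of the pairing
and of the first component of the bracket along the multiplication
`(γ, k + δγ') · (γ', k) = (γ + γ', k)`: against a second product `(α, l + δα') · (α', l)` the
defects are `γ'(δα) - α(δγ')` and `(δγ)·α' + (δα')·γ`, which vanish by symmetry and invariance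
respectively. -/

section

variable {K : Type*} [LieRing K] [LieAlgebra ℝ K] {δ : Dual ℝ K →ₗ[ℝ] K}

variable (δ) in
def IsSymmetricMap : Prop := ∀ γ γ' : Dual ℝ K, γ' (δ γ) = γ (δ γ')

variable (δ) in
def IsInvariantMap : Prop := ∀ (k : K) (γ γ' : Dual ℝ K), γ ⁅k, δ γ'⁆ + γ' ⁅k, δ γ⁆ = 0

lemma coad_apply (k : K) (γ : Dual ℝ K) (x : K) : coad k γ x = -γ ⁅k, x⁆ := rfl

lemma coad_add_left (k l : K) (γ : Dual ℝ K) : coad (k + l) γ = coad k γ + coad l γ := by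
  ext x
  simp only [LinearMap.add_apply, coad_apply, add_lie, map_add]
  ring

lemma coad_add_right (k : K) (γ γ' : Dual ℝ K) : coad k (γ + γ') = coad k γ + coad k γ' := by
  ext x
  simp only [LinearMap.add_apply, coad_apply]
  ring

lemma coad_delta_add_coad_delta
    (hinv : IsInvariantMap δ) (γ γ' : Dual ℝ K) :
    coad (δ γ) γ' + coad (δ γ') γ = 0 := by
  ext x
  simp only [LinearMap.add_apply, coad_apply, LinearMap.zero_apply]
  rw [← lie_skew (δ γ) x, ← lie_skew (δ γ') x, map_neg, map_neg]
  linarith [hinv x γ' γ]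

lemma delta_coad (hsym : IsSymmetricMap δ)
    (hinv : IsInvariantMap δ) (k : K) (γ : Dual ℝ K) :
    δ (coad k γ) = ⁅k, δ γ⁆ := by
  refine eval_apply_injective ℝ (LinearMap.ext fun μ => ?_)
  simp only [Dual.eval_apply, hsym _ μ, coad_apply]
  linarith [hinv k γ μ]

lemma lie_add_delta_dblBracket_fst (hsym : IsSymmetricMap δ)
    (hinv : IsInvariantMap δ) (e f : Dual ℝ K × K) :
    ⁅e.2, f.2⁆ + δ (dblBracket δ e f).1 = ⁅e.2 + δ e.1, f.2 + δ f.1⁆ := by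
  simp only [dblBracket, map_add, map_sub, delta_coad hsym hinv, add_lie, lie_add,
    ← lie_skew f.2 (δ e.1)]
  abel

lemma dblBracket_fst_add
    (hinv : IsInvariantMap δ)
    (γ γ' α α' : Dual ℝ K) (k l : K) :
    (dblBracket δ (γ + γ', k) (α + α', l)).1 =
      (dblBracket δ (γ, k + δ γ') (α, l + δ α')).1 + (dblBracket δ (γ', k) (α', l)).1 := by
  simp only [dblBracket, map_add, coad_add_left, coad_add_right]
  linear_combination (norm := module) coad_delta_add_coad_delta hinv γ α'

lemma dblPairing_fst_add (hsym : IsSymmetricMap δ)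
    (γ γ' α α' : Dual ℝ K) (k l : K) :
    dblPairing δ (γ + γ', k) (α + α', l) =
      dblPairing δ (γ, k + δ γ') (α, l + δ α') + dblPairing δ (γ', k) (α', l) := by
  simp only [dblPairing, LinearMap.add_apply, map_add]
  linear_combination (1 / 2 : ℝ) * hsym α γ'

end

theorem stmt5 {K : Type*} [LieRing K] [LieAlgebra ℝ K]
    (δ : Dual ℝ K →ₗ[ℝ] K)
    (hsym : ∀ γ γ' : Dual ℝ K, γ' (δ γ) = γ (δ γ'))
    (hinv : ∀ (k : K) (γ γ' : Dual ℝ K), γ ⁅k, δ γ'⁆ + γ' ⁅k, δ γ⁆ = 0) :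
    -- (i) gr(m) is isotropic in (K*×K) × conj(K*×K) × conj(K*×K)
    (∀ p ∈ grMul δ, ∀ q ∈ grMul δ,
        dblPairing δ p.1 q.1 - dblPairing δ p.2.1 q.2.1 - dblPairing δ p.2.2 q.2.2 = 0) ∧
    -- (ii) gr(m) is closed under the componentwise double bracket
    (∀ p ∈ grMul δ, ∀ q ∈ grMul δ,
        (dblBracket δ p.1 q.1, dblBracket δ p.2.1 q.2.1, dblBracket δ p.2.2 q.2.2)
          ∈ grMul δ) := by
  refine ⟨?_, ?_⟩
  · rintro _ ⟨γ, γ', k, rfl⟩ _ ⟨α, α', l, rfl⟩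
    rw [dblPairing_fst_add hsym]
    ring
  · rintro _ ⟨γ, γ', k, rfl⟩ _ ⟨α, α', l, rfl⟩
    refine ⟨(dblBracket δ (γ, k + δ γ') (α, l + δ α')).1, (dblBracket δ (γ', k) (α', l)).1,
      ⁅k, l⁆, ?_⟩
    rw [← dblBracket_fst_add hinv, lie_add_delta_dblBracket_fst hsym hinv (γ', k) (α', l)]
    rfl
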